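/- arXiv:1409.4032 — 3 statements merged into one kernel-verified Lean document; each statement's English description precedes it below -/
import Mathlib

section
/- Let S be a countable set, ε > 0, α > 0, M > 0, and δ > 0 such that β := (1/α)(‖c‖δ + 2Mδ/ε) < 1, where c : S × U → [0,∞) is bounded. Then the operator T on C_b([ε, ε+δ] × S) defined by (Tf)(η,i) = e^{(ε/α)‖c‖} + (1/α) ∫_ε^η inf_{u ∈ U_i} [ c(i,u) f(θ,i) + (1/θ) ∑_j λ_{ij}(u) f(θ,j) ] dθ is a contraction with constant β, and hence has a unique fixed point in C_b([ε, ε+δ] × S). -/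
/-!
For a conservative rate row, `∑ⱼ |λᵢⱼ(u)| = -2 λᵢᵢ(u) ≤ 2M`. Hence for `θ ≥ ε` the bracket
`c(i,u) f(i) + θ⁻¹ ∑ⱼ λᵢⱼ(u) f(j)` is Lipschitz in `f` for the sup norm with constant `‖c‖ + 2M/ε`,
uniformly in `u`; taking the infimum over `u` preserves this, and integrating over an interval of
length at most `δ` gives the contraction constant `β`. The integrand is measurable because an
infimum of continuous functions of `θ` is upper semicontinuous. Banach's fixed point theorem on
the bounded continuous functions on `[ε, ε + δ] × S`, with `S` discrete, gives the fixed point.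
-/

open MeasureTheory Real Set
open scoped BoundedContinuousFunction

section InfImage

variable {A : Type*} {K : Set A} {φ ψ : A → ℝ}

lemma bddBelow_image_of_abs_le {B : ℝ} (h : ∀ u ∈ K, |φ u| ≤ B) : BddBelow (φ '' K) :=
  ⟨-B, forall_mem_image.2 fun u hu => neg_le_of_abs_le (h u hu)⟩

lemma abs_sInf_image_le (hK : K.Nonempty) {B : ℝ} (h : ∀ u ∈ K, |φ u| ≤ B) :
    |sInf (φ '' K)| ≤ B := by
  obtain ⟨u, hu⟩ := hK
  refine abs_le.2 ⟨le_csInf ⟨φ u, u, hu, rfl⟩ ?_, ?_⟩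
  · exact forall_mem_image.2 fun v hv => neg_le_of_abs_le (h v hv)
  · exact (csInf_le (bddBelow_image_of_abs_le h) ⟨u, hu, rfl⟩).trans (le_of_abs_le (h u hu))

lemma sInf_image_le_sInf_image_add (hK : K.Nonempty) (hφ : BddBelow (φ '' K)) {r : ℝ}
    (h : ∀ u ∈ K, φ u ≤ ψ u + r) : sInf (φ '' K) ≤ sInf (ψ '' K) + r := by
  rw [← sub_le_iff_le_add]
  refine le_csInf (hK.image ψ) (forall_mem_image.2 fun u hu => ?_)
  linarith [csInf_le hφ ⟨u, hu, rfl⟩, h u hu]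

lemma abs_sInf_image_sub_sInf_image_le (hK : K.Nonempty) (hφ : BddBelow (φ '' K))
    (hψ : BddBelow (ψ '' K)) {r : ℝ} (h : ∀ u ∈ K, |φ u - ψ u| ≤ r) :
    |sInf (φ '' K) - sInf (ψ '' K)| ≤ r := by
  have hφψ := sInf_image_le_sInf_image_add (ψ := ψ) hK hφ (r := r) fun u hu => by
    linarith [(abs_sub_le_iff.1 (h u hu)).1]
  have hψφ := sInf_image_le_sInf_image_add (ψ := φ) hK hψ (r := r) fun u hu => by
    linarith [(abs_sub_le_iff.1 (h u hu)).2]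
  exact abs_sub_le_iff.2 ⟨by linarith, by linarith⟩

lemma measurable_sInf_image {X : Type*} [TopologicalSpace X] [MeasurableSpace X]
    [OpensMeasurableSpace X] {Φ : A → X → ℝ} (hΦ : ∀ u ∈ K, Continuous (Φ u))
    (hbdd : ∀ x, BddBelow ((Φ · x) '' K)) : Measurable fun x => sInf ((Φ · x) '' K) := by
  simp_rw [sInf_image']
  refine UpperSemicontinuous.measurable (upperSemicontinuous_ciInf (fun x => ?_)
    fun u => (hΦ u u.2).upperSemicontinuous)
  simpa only [image_eq_range] using hbdd x

end InfImage

lemma abs_intervalIntegral_le_of_mem_Icc {g : ℝ → ℝ} {a η b C : ℝ} (hη : η ∈ Icc a b)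
    (hC : 0 ≤ C) (hg : ∀ t ∈ Ioc a η, |g t| ≤ C) : |∫ t in a..η, g t| ≤ C * (b - a) := by
  have h := intervalIntegral.norm_integral_le_of_norm_le_const (C := C) (f := g)
    (a := a) (b := η) (by rwa [uIoc_of_le hη.1])
  rw [Real.norm_eq_abs, abs_of_nonneg (sub_nonneg.2 hη.1)] at h
  exact h.trans (mul_le_mul_of_nonneg_left (by linarith [hη.2]) hC)

section RateRow

variable {S : Type*} {w x : S → ℝ}

lemma hasSum_abs_of_rate_row {i : S} (hoff : ∀ j, j ≠ i → 0 ≤ w j) (hw : Summable w)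
    (h0 : ∑' j, w j = 0) : HasSum (fun j => |w j|) (-2 * w i) := by
  classical
  have hii : w i ≤ 0 := by
    have hrest : 0 ≤ ∑' j, if j = i then 0 else w j :=
      tsum_nonneg fun j => by split_ifs with h; exacts [le_rfl, hoff j h]
    linarith [hw.tsum_eq_add_tsum_ite i]
  have habs : (fun j => |w j|) = fun j => w j + (Pi.single i (-2 * w i) : S → ℝ) j := by
    funext j
    rcases eq_or_ne j i with rfl | h
    · rw [Pi.single_eq_same, abs_of_nonpos hii]; ring
    · rw [Pi.single_eq_of_ne h, abs_of_nonneg (hoff j h), add_zero]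
  have h := hw.hasSum.add (hasSum_pi_single i (-2 * w i))
  rwa [h0, zero_add, ← habs] at h

lemma summable_mul_of_abs_le (hw : Summable fun j => |w j|) {B : ℝ} (hx : ∀ j, |x j| ≤ B) :
    Summable fun j => w j * x j :=
  hw.mul_right B |>.of_norm_bounded fun j => by
    rw [Real.norm_eq_abs, abs_mul]; exact mul_le_mul_of_nonneg_left (hx j) (abs_nonneg _)

lemma abs_tsum_mul_le (hw : Summable fun j => |w j|) {B : ℝ} (hx : ∀ j, |x j| ≤ B) :
    |∑' j, w j * x j| ≤ (∑' j, |w j|) * B :=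
  tsum_of_norm_bounded (hw.hasSum.mul_right B) fun j => by
    rw [Real.norm_eq_abs, abs_mul]; exact mul_le_mul_of_nonneg_left (hx j) (abs_nonneg _)

lemma abs_mul_add_mul_tsum_le {i : S} {a s s₀ C Λ B : ℝ} (ha : 0 ≤ a) (haC : a ≤ C)
    (hs : 0 ≤ s) (hss₀ : s ≤ s₀) (hw : Summable fun j => |w j|) (hwΛ : ∑' j, |w j| ≤ Λ)
    (hx : ∀ j, |x j| ≤ B) : |a * x i + s * ∑' j, w j * x j| ≤ (C + s₀ * Λ) * B := by
  have hB : 0 ≤ B := (abs_nonneg _).trans (hx i)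
  have hΛ : 0 ≤ Λ := (tsum_nonneg fun j => abs_nonneg (w j)).trans hwΛ
  have hsum : |∑' j, w j * x j| ≤ Λ * B :=
    (abs_tsum_mul_le hw hx).trans (mul_le_mul_of_nonneg_right hwΛ hB)
  calc |a * x i + s * ∑' j, w j * x j| ≤ |a * x i| + |s * ∑' j, w j * x j| := abs_add_le _ _
    _ = a * |x i| + s * |∑' j, w j * x j| := by
        rw [abs_mul, abs_mul, abs_of_nonneg ha, abs_of_nonneg hs]
    _ ≤ C * B + s₀ * (Λ * B) :=
        add_le_add (mul_le_mul haC (hx i) (abs_nonneg _) (ha.trans haC))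
          (mul_le_mul hss₀ hsum (abs_nonneg _) (hs.trans hss₀))
    _ = (C + s₀ * Λ) * B := by ring

end RateRow

section Hamiltonian

variable {S A : Type*} (U : S → Set A) (lam : S → S → A → ℝ) (c : S → A → ℝ)

noncomputable def hamiltonian (x : S → ℝ) (s : ℝ) (i : S) : ℝ :=
  sInf ((fun u => c i u * x i + s * ∑' j, lam i j u * x j) '' U i)

/-- In the paper `a = e^{(ε/α)‖c‖}` and `κ = 1/α`. -/
noncomputable def costOperator (a κ ε : ℝ) (f : ℝ → S → ℝ) (η : ℝ) (i : S) : ℝ :=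
  a + κ * ∫ t in ε..η, hamiltonian U lam c (f t) (1 / t) i

variable {U lam c} {i : S} {Cc Λ : ℝ}

lemma abs_hamiltonian_le (hc0 : ∀ u, 0 ≤ c i u) (hcb : ∀ u, c i u ≤ Cc)
    (hlam : ∀ u, Summable fun j => |lam i j u|) (hΛ : ∀ u, ∑' j, |lam i j u| ≤ Λ)
    (hU : (U i).Nonempty) {x : S → ℝ} {s s₀ B : ℝ} (hs : 0 ≤ s) (hss₀ : s ≤ s₀)
    (hx : ∀ j, |x j| ≤ B) : |hamiltonian U lam c x s i| ≤ (Cc + s₀ * Λ) * B :=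
  abs_sInf_image_le hU fun u _ =>
    abs_mul_add_mul_tsum_le (hc0 u) (hcb u) hs hss₀ (hlam u) (hΛ u) hx

lemma abs_hamiltonian_sub_le (hc0 : ∀ u, 0 ≤ c i u) (hcb : ∀ u, c i u ≤ Cc)
    (hlam : ∀ u, Summable fun j => |lam i j u|) (hΛ : ∀ u, ∑' j, |lam i j u| ≤ Λ)
    (hU : (U i).Nonempty) {x y : S → ℝ} {s s₀ B₁ B₂ d : ℝ} (hs : 0 ≤ s) (hss₀ : s ≤ s₀)
    (hx : ∀ j, |x j| ≤ B₁) (hy : ∀ j, |y j| ≤ B₂) (hxy : ∀ j, |x j - y j| ≤ d) :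
    |hamiltonian U lam c x s i - hamiltonian U lam c y s i| ≤ (Cc + s₀ * Λ) * d := by
  have hbound {z : S → ℝ} {B : ℝ} (hz : ∀ j, |z j| ≤ B) (u : A) :
      |c i u * z i + s * ∑' j, lam i j u * z j| ≤ (Cc + s * Λ) * B :=
    abs_mul_add_mul_tsum_le (hc0 u) (hcb u) hs le_rfl (hlam u) (hΛ u) hz
  refine abs_sInf_image_sub_sInf_image_le hU (bddBelow_image_of_abs_le fun u _ => hbound hx u)
    (bddBelow_image_of_abs_le fun u _ => hbound hy u) fun u _ => ?_
  have hsub : ∑' j, lam i j u * (x j - y j) = ∑' j, lam i j u * x j - ∑' j, lam i j u * y j := by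
    rw [← (summable_mul_of_abs_le (hlam u) hx).tsum_sub (summable_mul_of_abs_le (hlam u) hy)]
    exact tsum_congr fun j => mul_sub _ _ _
  have hlin : c i u * x i + s * ∑' j, lam i j u * x j - (c i u * y i + s * ∑' j, lam i j u * y j)
      = c i u * (x i - y i) + s * ∑' j, lam i j u * (x j - y j) := by
    rw [hsub]; ring
  rw [hlin]
  exact abs_mul_add_mul_tsum_le (x := fun j => x j - y j) (hc0 u) (hcb u) hs hss₀ (hlam u) (hΛ u)
    hxy

lemma measurable_hamiltonian (hc0 : ∀ u, 0 ≤ c i u) (hcb : ∀ u, c i u ≤ Cc)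
    (hlam : ∀ u, Summable fun j => |lam i j u|) (hΛ : ∀ u, ∑' j, |lam i j u| ≤ Λ)
    {F : ℝ → S → ℝ} {σ : ℝ → ℝ} {B : ℝ} (hF : ∀ j, Continuous (F · j)) (hFB : ∀ t j, |F t j| ≤ B)
    (hσ : Continuous σ) (hσ0 : ∀ t, 0 ≤ σ t) :
    Measurable fun t => hamiltonian U lam c (F t) (σ t) i := by
  refine measurable_sInf_image (fun u _ => ?_) fun t => bddBelow_image_of_abs_le fun u _ =>
    abs_mul_add_mul_tsum_le (hc0 u) (hcb u) (hσ0 t) le_rfl (hlam u) (hΛ u) (hFB t)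
  refine (continuous_const.mul (hF i)).add (hσ.mul ?_)
  refine continuous_tsum (fun j => continuous_const.mul (hF j)) ((hlam u).mul_right B)
    fun j t => ?_
  rw [Real.norm_eq_abs, abs_mul]
  exact mul_le_mul_of_nonneg_left (hFB t j) (abs_nonneg _)

/-- Freezing `f` and `1 / t` outside `[ε, b]` by `projIcc` turns the integrand into an infimum of
functions continuous on all of `ℝ`. -/
lemma integrableOn_hamiltonian (hc0 : ∀ u, 0 ≤ c i u) (hcb : ∀ u, c i u ≤ Cc)
    (hlam : ∀ u, Summable fun j => |lam i j u|) (hΛ : ∀ u, ∑' j, |lam i j u| ≤ Λ)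
    (hU : (U i).Nonempty) {ε b B : ℝ} (hε : 0 < ε) {f : ℝ → S → ℝ}
    (hf : ∀ j, ContinuousOn (f · j) (Icc ε b)) (hfB : ∀ t j, |f t j| ≤ B) :
    IntegrableOn (fun t => hamiltonian U lam c (f t) (1 / t) i) (Icc ε b) := by
  rcases lt_or_ge b ε with hbε | hεb
  · simp [Icc_eq_empty_of_lt hbε]
  set p : ℝ → ℝ := fun t => projIcc ε b hεb t
  have hp : Continuous p := continuous_subtype_val.comp continuous_projIcc
  have hpε (t : ℝ) : ε ≤ p t := (projIcc ε b hεb t).2.1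
  have hmeas : Measurable fun t => hamiltonian U lam c (f (p t)) (1 / p t) i :=
    measurable_hamiltonian hc0 hcb hlam hΛ
      (fun j => (hf j).comp_continuous hp fun t => (projIcc ε b hεb t).2) (fun t => hfB _)
      (continuous_const.div hp fun t => (hε.trans_le (hpε t)).ne') fun t => by
        have := hε.trans_le (hpε t); positivity
  refine (Measure.integrableOn_of_bounded measure_Icc_lt_top.ne hmeas.aestronglyMeasurable
    (M := (Cc + 1 / ε * Λ) * B) (ae_of_all _ fun t => ?_)).congr_fun
    (fun t ht => by simp only [p, projIcc_of_mem hεb ht]) measurableSet_Icc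
  have := hε.trans_le (hpε t)
  exact abs_hamiltonian_le hc0 hcb hlam hΛ hU (by positivity)
    (one_div_le_one_div_of_le hε (hpε t)) fun j => hfB _ j

variable {a κ ε b : ℝ} {f f₁ f₂ : ℝ → S → ℝ}

lemma costOperator_congr {η : ℝ} (hεη : ε ≤ η) (h : ∀ t ∈ Icc ε η, f₁ t = f₂ t) :
    costOperator U lam c a κ ε f₁ η i = costOperator U lam c a κ ε f₂ η i := by
  unfold costOperator
  congr 2
  refine intervalIntegral.integral_congr fun t ht => ?_
  rw [uIcc_of_le hεη] at ht
  simp only [h t ht]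

lemma continuousOn_costOperator (hc0 : ∀ u, 0 ≤ c i u) (hcb : ∀ u, c i u ≤ Cc)
    (hlam : ∀ u, Summable fun j => |lam i j u|) (hΛ : ∀ u, ∑' j, |lam i j u| ≤ Λ)
    (hU : (U i).Nonempty) (hε : 0 < ε) (hεb : ε ≤ b) {B : ℝ}
    (hf : ∀ j, ContinuousOn (f · j) (Icc ε b)) (hfB : ∀ t j, |f t j| ≤ B) :
    ContinuousOn (fun η => costOperator U lam c a κ ε f η i) (Icc ε b) := by
  have h := intervalIntegral.continuousOn_primitive_interval (μ := volume) (a := ε) (b := b)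
    (by rw [uIcc_of_le hεb]; exact integrableOn_hamiltonian hc0 hcb hlam hΛ hU hε hf hfB)
  rw [uIcc_of_le hεb] at h
  exact continuousOn_const.add (continuousOn_const.mul h)

lemma abs_costOperator_le (hc0 : ∀ u, 0 ≤ c i u) (hcb : ∀ u, c i u ≤ Cc)
    (hlam : ∀ u, Summable fun j => |lam i j u|) (hΛ : ∀ u, ∑' j, |lam i j u| ≤ Λ)
    (hU : (U i).Nonempty) (hε : 0 < ε) (hκ : 0 ≤ κ) {B : ℝ} (hfB : ∀ t j, |f t j| ≤ B)
    {η : ℝ} (hη : η ∈ Icc ε b) :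
    |costOperator U lam c a κ ε f η i| ≤ |a| + κ * ((Cc + 1 / ε * Λ) * B * (b - ε)) := by
  have hpt : ∀ t ∈ Ioc ε η, |hamiltonian U lam c (f t) (1 / t) i| ≤ (Cc + 1 / ε * Λ) * B :=
    fun t ht => abs_hamiltonian_le hc0 hcb hlam hΛ hU (one_div_nonneg.2 (hε.trans ht.1).le)
      (one_div_le_one_div_of_le hε ht.1.le) (hfB t)
  have hC : 0 ≤ (Cc + 1 / ε * Λ) * B :=
    (abs_nonneg _).trans (abs_hamiltonian_le hc0 hcb hlam hΛ hU (one_div_nonneg.2 hε.le) le_rfl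
      (hfB ε))
  calc |costOperator U lam c a κ ε f η i|
      ≤ |a| + κ * |∫ t in ε..η, hamiltonian U lam c (f t) (1 / t) i| := by
        rw [costOperator]
        exact (abs_add_le _ _).trans_eq (by rw [abs_mul, abs_of_nonneg hκ])
    _ ≤ |a| + κ * ((Cc + 1 / ε * Λ) * B * (b - ε)) := by
        gcongr; exact abs_intervalIntegral_le_of_mem_Icc hη hC hpt

lemma abs_costOperator_sub_le (hc0 : ∀ u, 0 ≤ c i u) (hcb : ∀ u, c i u ≤ Cc)
    (hlam : ∀ u, Summable fun j => |lam i j u|) (hΛ : ∀ u, ∑' j, |lam i j u| ≤ Λ)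
    (hU : (U i).Nonempty) (hε : 0 < ε) (hκ : 0 ≤ κ) {B₁ B₂ d : ℝ}
    (hf₁ : ∀ j, ContinuousOn (f₁ · j) (Icc ε b)) (hf₂ : ∀ j, ContinuousOn (f₂ · j) (Icc ε b))
    (hB₁ : ∀ t j, |f₁ t j| ≤ B₁) (hB₂ : ∀ t j, |f₂ t j| ≤ B₂)
    (hd : ∀ t ∈ Icc ε b, ∀ j, |f₁ t j - f₂ t j| ≤ d) {η : ℝ} (hη : η ∈ Icc ε b) :
    |costOperator U lam c a κ ε f₁ η i - costOperator U lam c a κ ε f₂ η i|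
      ≤ κ * ((Cc + 1 / ε * Λ) * (b - ε)) * d := by
  have hint {f : ℝ → S → ℝ} {B : ℝ} (hf : ∀ j, ContinuousOn (f · j) (Icc ε b))
      (hfB : ∀ t j, |f t j| ≤ B) :
      IntervalIntegrable (fun t => hamiltonian U lam c (f t) (1 / t) i) volume ε η := by
    refine IntegrableOn.intervalIntegrable ?_
    rw [uIcc_of_le hη.1]
    exact (integrableOn_hamiltonian hc0 hcb hlam hΛ hU hε hf hfB).mono_set
      (Icc_subset_Icc_right hη.2)
  have hpt : ∀ t ∈ Ioc ε η, |hamiltonian U lam c (f₁ t) (1 / t) i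
      - hamiltonian U lam c (f₂ t) (1 / t) i| ≤ (Cc + 1 / ε * Λ) * d :=
    fun t ht => abs_hamiltonian_sub_le hc0 hcb hlam hΛ hU (one_div_nonneg.2 (hε.trans ht.1).le)
      (one_div_le_one_div_of_le hε ht.1.le) (hB₁ t) (hB₂ t) (hd t ⟨ht.1.le, ht.2.trans hη.2⟩)
  have hC : 0 ≤ (Cc + 1 / ε * Λ) * d :=
    (abs_nonneg _).trans (abs_hamiltonian_sub_le hc0 hcb hlam hΛ hU (one_div_nonneg.2 hε.le)
      le_rfl (hB₁ ε) (hB₂ ε) (hd ε ⟨le_rfl, hη.1.trans hη.2⟩))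
  calc |costOperator U lam c a κ ε f₁ η i - costOperator U lam c a κ ε f₂ η i|
      = κ * |∫ t in ε..η, (hamiltonian U lam c (f₁ t) (1 / t) i
          - hamiltonian U lam c (f₂ t) (1 / t) i)| := by
        rw [costOperator, costOperator, add_sub_add_left_eq_sub, ← mul_sub,
          ← intervalIntegral.integral_sub (hint hf₁ hB₁) (hint hf₂ hB₂), abs_mul, abs_of_nonneg hκ]
    _ ≤ κ * ((Cc + 1 / ε * Λ) * d * (b - ε)) :=
        mul_le_mul_of_nonneg_left (abs_intervalIntegral_le_of_mem_Icc hη hC hpt) hκ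
    _ = κ * ((Cc + 1 / ε * Λ) * (b - ε)) * d := by ring

section BoundedContinuous

variable [TopologicalSpace S]

noncomputable def extendIcc (hεb : ε ≤ b) (g : Icc ε b × S →ᵇ ℝ) (t : ℝ) (j : S) : ℝ :=
  g (projIcc ε b hεb t, j)

lemma extendIcc_of_mem (hεb : ε ≤ b) (g : Icc ε b × S →ᵇ ℝ) {t : ℝ} (ht : t ∈ Icc ε b) (j : S) :
    extendIcc hεb g t j = g (⟨t, ht⟩, j) := by
  rw [extendIcc, projIcc_of_mem hεb ht]

lemma continuousOn_extendIcc (hεb : ε ≤ b) (g : Icc ε b × S →ᵇ ℝ) (j : S) :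
    ContinuousOn (extendIcc hεb g · j) (Icc ε b) :=
  (g.continuous.comp (continuous_projIcc.prodMk continuous_const)).continuousOn

lemma abs_extendIcc_le (hεb : ε ≤ b) (g : Icc ε b × S →ᵇ ℝ) (t : ℝ) (j : S) :
    |extendIcc hεb g t j| ≤ ‖g‖ :=
  g.norm_coe_le_norm _

lemma exists_boundedContinuous_eq [DiscreteTopology S] {B : ℝ}
    (hf : ∀ j, ContinuousOn (f · j) (Icc ε b)) (hfB : ∀ t ∈ Icc ε b, ∀ j, |f t j| ≤ B) :
    ∃ g : Icc ε b × S →ᵇ ℝ, ∀ p, g p = f p.1 p.2 :=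
  ⟨.ofNormedAddCommGroup (fun p => f p.1 p.2)
    (continuous_prod_of_discrete_right.2 fun j => (hf j).domRestrict) B fun p => hfB _ p.1.2 _,
    fun _ => rfl⟩

lemma contractingWith_costOperator (hc0 : ∀ i u, 0 ≤ c i u) (hcb : ∀ i u, c i u ≤ Cc)
    (hlam : ∀ i u, Summable fun j => |lam i j u|) (hΛ : ∀ i u, ∑' j, |lam i j u| ≤ Λ)
    (hU : ∀ i, (U i).Nonempty) (hε : 0 < ε) (hκ : 0 ≤ κ) (hεb : ε ≤ b)
    (hK : κ * ((Cc + 1 / ε * Λ) * (b - ε)) < 1) {T : (Icc ε b × S →ᵇ ℝ) → Icc ε b × S →ᵇ ℝ}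
    (hT : ∀ g p, T g p = costOperator U lam c a κ ε (extendIcc hεb g) p.1 p.2) :
    ContractingWith (κ * ((Cc + 1 / ε * Λ) * (b - ε))).toNNReal T := by
  refine ⟨Real.toNNReal_lt_one.2 hK, LipschitzWith.of_dist_le_mul fun g₁ g₂ => ?_⟩
  refine (BoundedContinuousFunction.dist_le (by positivity)).2 fun ⟨⟨η, hη⟩, i⟩ => ?_
  rw [Real.dist_eq, hT, hT, Real.coe_toNNReal']
  refine (abs_costOperator_sub_le (hc0 i) (hcb i) (hlam i) (hΛ i) (hU i) hε hκ
    (continuousOn_extendIcc hεb g₁) (continuousOn_extendIcc hεb g₂) (abs_extendIcc_le hεb g₁)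
    (abs_extendIcc_le hεb g₂) (fun t _ j => ?_) hη).trans
    (mul_le_mul_of_nonneg_right (le_max_left _ _) dist_nonneg)
  simpa only [extendIcc, Real.dist_eq] using g₁.dist_coe_le_dist (projIcc ε b hεb t, j)

end BoundedContinuous

theorem exists_unique_fixedPoint_costOperator (hc0 : ∀ i u, 0 ≤ c i u)
    (hcb : ∀ i u, c i u ≤ Cc) (hlam : ∀ i u, Summable fun j => |lam i j u|)
    (hΛ : ∀ i u, ∑' j, |lam i j u| ≤ Λ) (hU : ∀ i, (U i).Nonempty) (hε : 0 < ε) (hκ : 0 ≤ κ)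
    (hεb : ε ≤ b) (hK : κ * ((Cc + 1 / ε * Λ) * (b - ε)) < 1) :
    ∃ f : ℝ → S → ℝ,
      ((∃ B, ∀ t j, |f t j| ≤ B) ∧ (∀ j, ContinuousOn (f · j) (Icc ε b)) ∧
        ∀ η ∈ Icc ε b, ∀ i, f η i = costOperator U lam c a κ ε f η i) ∧
      ∀ f' : ℝ → S → ℝ,
        ((∃ B, ∀ t j, |f' t j| ≤ B) ∧ (∀ j, ContinuousOn (f' · j) (Icc ε b)) ∧
          ∀ η ∈ Icc ε b, ∀ i, f' η i = costOperator U lam c a κ ε f' η i) →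
        ∀ η ∈ Icc ε b, ∀ i, f' η i = f η i := by
  let _ : TopologicalSpace S := ⊥
  have _ : DiscreteTopology S := ⟨rfl⟩
  choose T hT using fun g => exists_boundedContinuous_eq
    (fun i => continuousOn_costOperator (a := a) (κ := κ) (hc0 i) (hcb i) (hlam i) (hΛ i) (hU i)
      hε hεb (continuousOn_extendIcc hεb g) (abs_extendIcc_le hεb g))
    fun η hη i => abs_costOperator_le (a := a) (hc0 i) (hcb i) (hlam i) (hΛ i) (hU i) hε hκ
      (abs_extendIcc_le hεb g) hη
  have hcontr := contractingWith_costOperator hc0 hcb hlam hΛ hU hε hκ hεb hK hT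
  set g₀ := hcontr.fixedPoint T
  have hg₀ : T g₀ = g₀ := hcontr.fixedPoint_isFixedPt
  refine ⟨extendIcc hεb g₀, ⟨⟨_, abs_extendIcc_le hεb g₀⟩, continuousOn_extendIcc hεb g₀,
    fun η hη i => ?_⟩, ?_⟩
  · conv_lhs => rw [extendIcc_of_mem hεb _ hη, ← hg₀]
    exact hT _ _
  rintro f' ⟨⟨B', hB'⟩, hf', hfix'⟩ η hη i
  obtain ⟨g', hg'⟩ := exists_boundedContinuous_eq hf' fun t _ j => hB' t j
  have hg'_fixed : Function.IsFixedPt T g' := by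
    ext ⟨⟨η', hη'⟩, i'⟩
    rw [hT, hg', hfix' η' hη' i']
    refine costOperator_congr hη'.1 fun t ht => funext fun j => ?_
    rw [extendIcc_of_mem hεb g' ⟨ht.1, ht.2.trans hη'.2⟩, hg']
  have hg'g₀ : g' = g₀ := hcontr.fixedPoint_unique hg'_fixed
  rw [extendIcc_of_mem hεb _ hη, ← hg'g₀, hg']

end Hamiltonian

theorem stmt_4_general {S : Type*} {A : Type*}
    (U : S → Set A) (hUne : ∀ i, (U i).Nonempty)
    (lam : S → S → A → ℝ)
    (hod : ∀ i j u, i ≠ j → 0 ≤ lam i j u)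
    (hsum : ∀ i u, Summable (fun j => lam i j u))
    (hrow : ∀ i u, ∑' j, lam i j u = 0)
    (M : ℝ) (hbd : ∀ i u, -lam i i u ≤ M)
    (c : S → A → ℝ) (Cc : ℝ)
    (hc0 : ∀ i u, 0 ≤ c i u) (hcb : ∀ i u, c i u ≤ Cc)
    (ε α δ : ℝ) (hε : 0 < ε) (hα : 0 < α) (hδ : 0 < δ)
    (β : ℝ) (hβdef : β = (1 / α) * (Cc * δ + 2 * M * δ / ε)) (hβ : β < 1) :
    (∀ f₁ f₂ : ℝ → S → ℝ, ∀ d : ℝ,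
      (∀ t ∈ Set.Icc ε (ε + δ), ∀ j : S, |f₁ t j - f₂ t j| ≤ d) →
      (∀ j, ContinuousOn (fun t => f₁ t j) (Set.Icc ε (ε + δ))) →
      (∀ j, ContinuousOn (fun t => f₂ t j) (Set.Icc ε (ε + δ))) →
      (∃ B₁, ∀ t j, |f₁ t j| ≤ B₁) → (∃ B₂, ∀ t j, |f₂ t j| ≤ B₂) →
      ∀ η ∈ Set.Icc ε (ε + δ), ∀ i : S,
        |(Real.exp ((ε / α) * Cc) + (1 / α) * ∫ t in ε..η,
              sInf ((fun u => c i u * f₁ t i + (1 / t) * ∑' j, lam i j u * f₁ t j) '' U i))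
          - (Real.exp ((ε / α) * Cc) + (1 / α) * ∫ t in ε..η,
              sInf ((fun u => c i u * f₂ t i + (1 / t) * ∑' j, lam i j u * f₂ t j) '' U i))|
          ≤ β * d) ∧
    ∃ f : ℝ → S → ℝ,
      ((∃ B, ∀ t j, |f t j| ≤ B) ∧
        (∀ j, ContinuousOn (fun t => f t j) (Set.Icc ε (ε + δ))) ∧
        ∀ η ∈ Set.Icc ε (ε + δ), ∀ i : S,
          f η i = Real.exp ((ε / α) * Cc) + (1 / α) * ∫ t in ε..η,
              sInf ((fun u => c i u * f t i + (1 / t) * ∑' j, lam i j u * f t j) '' U i)) ∧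
      ∀ f' : ℝ → S → ℝ,
        ((∃ B, ∀ t j, |f' t j| ≤ B) ∧
          (∀ j, ContinuousOn (fun t => f' t j) (Set.Icc ε (ε + δ))) ∧
          ∀ η ∈ Set.Icc ε (ε + δ), ∀ i : S,
            f' η i = Real.exp ((ε / α) * Cc) + (1 / α) * ∫ t in ε..η,
                sInf ((fun u => c i u * f' t i + (1 / t) * ∑' j, lam i j u * f' t j) '' U i)) →
        ∀ η ∈ Set.Icc ε (ε + δ), ∀ i : S, f' η i = f η i := by
  have hlam_abs (i : S) (u : A) : HasSum (fun j => |lam i j u|) (-2 * lam i i u) :=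
    hasSum_abs_of_rate_row (fun j hj => hod i j u (Ne.symm hj)) (hsum i u) (hrow i u)
  have hlam (i : S) (u : A) : Summable fun j => |lam i j u| := (hlam_abs i u).summable
  have hΛ (i : S) (u : A) : ∑' j, |lam i j u| ≤ 2 * M := by
    rw [(hlam_abs i u).tsum_eq]; linarith [hbd i u]
  have hκ : 0 ≤ 1 / α := one_div_nonneg.2 hα.le
  have hβK : β = 1 / α * ((Cc + 1 / ε * (2 * M)) * (ε + δ - ε)) := by rw [hβdef]; ring
  refine ⟨fun f₁ f₂ d hd hf₁ hf₂ ⟨B₁, hB₁⟩ ⟨B₂, hB₂⟩ η hη i => ?_, ?_⟩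
  · rw [hβK]
    exact abs_costOperator_sub_le (hc0 i) (hcb i) (hlam i) (hΛ i) (hUne i) hε hκ hf₁ hf₂ hB₁ hB₂
      hd hη
  · exact exists_unique_fixedPoint_costOperator hc0 hcb hlam hΛ hUne hε hκ (by linarith)
      (hβK ▸ hβ)

/-- The discounted-cost operator
`(Tf)(η,i) = e^{(ε/α)‖c‖} + (1/α)∫_ε^η inf_{u∈U_i}[c(i,u) f(θ,i) + (1/θ)∑_j λ_{ij}(u) f(θ,j)] dθ`
is a contraction with constant `β = (1/α)(‖c‖δ + 2Mδ/ε) < 1` on `C_b([ε,ε+δ] × S)`, and hence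
has a unique fixed point there. -/
theorem stmt_4 {S : Type*} [Countable S] [Nonempty S]
    {A : Type*} [TopologicalSpace A]
    (U : S → Set A) (hUcomp : ∀ i, IsCompact (U i)) (hUne : ∀ i, (U i).Nonempty)
    (lam : S → S → A → ℝ)
    (hlamcont : ∀ i j, ContinuousOn (lam i j) (U i))
    (hod : ∀ i j u, i ≠ j → 0 ≤ lam i j u)
    (hsum : ∀ i u, Summable (fun j => lam i j u))
    (hrow : ∀ i u, ∑' j, lam i j u = 0)
    (M : ℝ) (hM : 0 < M) (hbd : ∀ i u, -lam i i u ≤ M)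
    (c : S → A → ℝ) (Cc : ℝ)
    (hccont : ∀ i, ContinuousOn (c i) (U i))
    (hc0 : ∀ i u, 0 ≤ c i u) (hcb : ∀ i u, c i u ≤ Cc)
    (ε α δ : ℝ) (hε : 0 < ε) (hα : 0 < α) (hδ : 0 < δ)
    (β : ℝ) (hβdef : β = (1 / α) * (Cc * δ + 2 * M * δ / ε)) (hβ : β < 1) :
    (∀ f₁ f₂ : ℝ → S → ℝ, ∀ d : ℝ,
      (∀ t ∈ Set.Icc ε (ε + δ), ∀ j : S, |f₁ t j - f₂ t j| ≤ d) →
      (∀ j, ContinuousOn (fun t => f₁ t j) (Set.Icc ε (ε + δ))) →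
      (∀ j, ContinuousOn (fun t => f₂ t j) (Set.Icc ε (ε + δ))) →
      (∃ B₁, ∀ t j, |f₁ t j| ≤ B₁) → (∃ B₂, ∀ t j, |f₂ t j| ≤ B₂) →
      ∀ η ∈ Set.Icc ε (ε + δ), ∀ i : S,
        |(Real.exp ((ε / α) * Cc) + (1 / α) * ∫ t in ε..η,
              sInf ((fun u => c i u * f₁ t i + (1 / t) * ∑' j, lam i j u * f₁ t j) '' U i))
          - (Real.exp ((ε / α) * Cc) + (1 / α) * ∫ t in ε..η,
              sInf ((fun u => c i u * f₂ t i + (1 / t) * ∑' j, lam i j u * f₂ t j) '' U i))|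
          ≤ β * d) ∧
    ∃ f : ℝ → S → ℝ,
      ((∃ B, ∀ t j, |f t j| ≤ B) ∧
        (∀ j, ContinuousOn (fun t => f t j) (Set.Icc ε (ε + δ))) ∧
        ∀ η ∈ Set.Icc ε (ε + δ), ∀ i : S,
          f η i = Real.exp ((ε / α) * Cc) + (1 / α) * ∫ t in ε..η,
              sInf ((fun u => c i u * f t i + (1 / t) * ∑' j, lam i j u * f t j) '' U i)) ∧
      ∀ f' : ℝ → S → ℝ,
        ((∃ B, ∀ t j, |f' t j| ≤ B) ∧
          (∀ j, ContinuousOn (fun t => f' t j) (Set.Icc ε (ε + δ))) ∧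
          ∀ η ∈ Set.Icc ε (ε + δ), ∀ i : S,
            f' η i = Real.exp ((ε / α) * Cc) + (1 / α) * ∫ t in ε..η,
                sInf ((fun u => c i u * f' t i + (1 / t) * ∑' j, lam i j u * f' t j) '' U i)) →
        ∀ η ∈ Set.Icc ε (ε + δ), ∀ i : S, f' η i = f η i :=
  stmt_4_general U hUne lam hod hsum hrow M hbd c Cc hc0 hcb ε α δ hε hα hδ β hβdef hβ
end

section
/- Let S be finite, u a stationary control, h : S → (0,∞), ρ ∈ ℝ, and g : S → [0,∞) with g(i₀) > 0 for some i₀, such that ∑_j λ_{ij}(u(i)) h(j) + θ c(i,u(i)) h(i) − θρ h(i) = −g(i) for all i. If the chain under the twisted kernel (the h-transform with multiplicative functional exp(θ∫(c−ρ^u))·h(X_t)/h(i)) is irreducible with invariant measure π̃ charging every state, then ρ^u < ρ, where ρ^u is the risk-sensitive average cost of u. -/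
open Real

/-- Strict policy improvement: suppose on a finite state space the control `u` satisfies
`∑_j λ_{ij}(u(i)) h(j) + θ c(i,u(i)) h(i) − θρ h(i) = −g(i)` with `g ≥ 0` and `g(i₀) > 0`
for some `i₀`, where `h > 0`. Let `hu > 0, ρu` be the principal eigenpair of `Λᵘ + θc(·,u)`
and let `pmeas` be an everywhere-positive invariant measure of the twisted (h-transform) kernel
`Λ̃_{ij} = (λ_{ij}(u(i)) + θ(c(i,u(i)) − ρu)1_{i=j}) hu(j)/hu(i)`. Then `ρu < ρ`. -/
theorem stmt_16 {S : Type*} [Fintype S] [DecidableEq S] [Nonempty S]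
    {A : Type*}
    (lam : S → S → A → ℝ)
    (hod : ∀ i j u, i ≠ j → 0 ≤ lam i j u)
    (hrow : ∀ i u, ∑ j, lam i j u = 0)
    (c : S → A → ℝ) (hc0 : ∀ i u, 0 ≤ c i u)
    (θ : ℝ) (hθ : 0 < θ)
    (u : S → A) (h : S → ℝ) (hpos : ∀ i, 0 < h i) (ρ : ℝ)
    (g : S → ℝ) (hg0 : ∀ i, 0 ≤ g i) (hgpos : ∃ i₀, 0 < g i₀)
    (hpoisson : ∀ i,
      ∑ j, lam i j (u i) * h j + θ * c i (u i) * h i - θ * ρ * h i = -(g i))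
    (hu : S → ℝ) (hupos : ∀ i, 0 < hu i) (ρu : ℝ)
    (heigen : ∀ i,
      ∑ j, lam i j (u i) * hu j + θ * c i (u i) * hu i = θ * ρu * hu i)
    (pmeas : S → ℝ) (hpmeaspos : ∀ i, 0 < pmeas i)
    (hpmeasinv : ∀ j, ∑ i, pmeas i *
      ((lam i j (u i) + (if i = j then θ * (c i (u i) - ρu) else 0)) * hu j / hu i) = 0) :
    ρu < ρ := by
  have hne : ∀ i, hu i ≠ 0 := fun i => (hupos i).ne'
  set K : S → S → ℝ := fun i j =>
    (lam i j (u i) + (if i = j then θ * (c i (u i) - ρu) else 0)) * hu j / hu i with hK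
  -- double sum vanishes by invariance
  have hswap : ∑ i, pmeas i * ∑ j, K i j * (h j / hu j) = 0 := by
    have : ∑ i, pmeas i * ∑ j, K i j * (h j / hu j)
        = ∑ j, (h j / hu j) * ∑ i, pmeas i * K i j := by
      simp_rw [Finset.mul_sum]
      rw [Finset.sum_comm]
      apply Finset.sum_congr rfl
      intro j _
      apply Finset.sum_congr rfl
      intro i _
      ring
    rw [this]
    have hz : ∀ j, ∑ i, pmeas i * K i j = 0 := fun j => hpmeasinv j
    simp [hz]
  -- inner sum computation
  have hinner : ∀ i, ∑ j, K i j * (h j / hu j)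
      = (θ * (ρ - ρu) * h i - g i) / hu i := by
    intro i
    have hterm : ∀ j, K i j * (h j / hu j)
        = (lam i j (u i) + (if i = j then θ * (c i (u i) - ρu) else 0)) * h j / hu i := by
      intro j
      rcases eq_or_ne i j with rfl | hij
      · simp only [hK, if_pos rfl]
        field_simp [hne i]
      · simp only [hK, if_neg hij]
        field_simp [hne i, hne j]
    simp_rw [hterm]
    rw [← Finset.sum_div]
    congr 1
    have hsplit : ∑ j, (lam i j (u i) + (if i = j then θ * (c i (u i) - ρu) else 0)) * h j
        = (∑ j, lam i j (u i) * h j) + θ * (c i (u i) - ρu) * h i := by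
      simp_rw [add_mul, Finset.sum_add_distrib, ite_mul, zero_mul,
        Finset.sum_ite_eq, Finset.mem_univ, if_pos]
    rw [hsplit]
    have := hpoisson i
    linarith [this]
  -- combine
  have hmain : θ * (ρ - ρu) * (∑ i, pmeas i * h i / hu i)
      = ∑ i, pmeas i * g i / hu i := by
    have : ∑ i, pmeas i * ((θ * (ρ - ρu) * h i - g i) / hu i) = 0 := by
      rw [← hswap]
      apply Finset.sum_congr rfl
      intro i _
      rw [hinner i]
    have hexp : ∑ i, pmeas i * ((θ * (ρ - ρu) * h i - g i) / hu i)
        = θ * (ρ - ρu) * (∑ i, pmeas i * h i / hu i) - ∑ i, pmeas i * g i / hu i := by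
      rw [Finset.mul_sum, ← Finset.sum_sub_distrib]
      apply Finset.sum_congr rfl
      intro i _
      field_simp
    rw [hexp] at this
    linarith
  have hApos : 0 < ∑ i, pmeas i * h i / hu i := by
    apply Finset.sum_pos
    · intro i _
      exact div_pos (mul_pos (hpmeaspos i) (hpos i)) (hupos i)
    · exact Finset.univ_nonempty
  have hBpos : 0 < ∑ i, pmeas i * g i / hu i := by
    obtain ⟨i₀, hi₀⟩ := hgpos
    apply Finset.sum_pos'
    · intro i _
      exact div_nonneg (mul_nonneg (hpmeaspos i).le (hg0 i)) (hupos i).le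
    · exact ⟨i₀, Finset.mem_univ i₀,
        div_pos (mul_pos (hpmeaspos i₀) hi₀) (hupos i₀)⟩
  nlinarith [hmain, hBpos, mul_pos hθ hApos]
end

section
/- Policy iteration terminates: let S and all action sets U_i be finite, and define a sequence of stationary controls u₁, u₂, … where u_{n+1}(i) minimizes u ↦ θ c(i,u) h^{u_n}(i) + ∑_j λ_{ij}(u) h^{u_n}(j), with h^{u_n} the positive solution of the multiplicative Poisson equation for u_n normalized by h^{u_n}(0)=1. Then the sequence ρ^{u_n} of risk-sensitive average costs is strictly decreasing until an optimal control is reached, and since there are finitely many stationary controls, the algorithm reaches an optimal control (minimizing ρ^u over all stationary u) in finitely many steps. -/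
open Real


/-- Comparison: exact solution `(ρ', h')` vs supersolution `(ρ, h)` gives `ρ' ≤ ρ`. -/
private lemma comp_le' {S : Type*} [Fintype S] [Nonempty S]
    (θ : ℝ) (hθ : 0 < θ) (ρ' ρ : ℝ) (h' h : S → ℝ)
    (hpos' : ∀ i, 0 < h' i) (hpos : ∀ i, 0 < h i)
    (M : S → S → ℝ) (hod : ∀ i j, i ≠ j → 0 ≤ M i j) (cM : S → ℝ)
    (heq : ∀ i, ∑ j, M i j * h' j + θ * cM i * h' i = θ * ρ' * h' i)
    (hsup : ∀ i, ∑ j, M i j * h j + θ * cM i * h i ≤ θ * ρ * h i) :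
    ρ' ≤ ρ := by
  obtain ⟨i0, -, hi0⟩ := Finset.exists_min_image Finset.univ (fun i => h i / h' i)
    ⟨Classical.arbitrary S, Finset.mem_univ _⟩
  set t := h i0 / h' i0 with ht
  have htle : ∀ j, t * h' j ≤ h j := by
    intro j
    have h1 := hi0 j (Finset.mem_univ j)
    have := (le_div_iff₀ (hpos' j)).mp h1
    linarith
  have hti0 : t * h' i0 = h i0 := div_mul_cancel₀ _ (ne_of_gt (hpos' i0))
  have hsum : ∑ j, M i0 j * (t * h' j) ≤ ∑ j, M i0 j * h j := by
    apply Finset.sum_le_sum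
    intro j _
    rcases eq_or_ne j i0 with rfl | hne
    · rw [hti0]
    · exact mul_le_mul_of_nonneg_left (htle j) (hod i0 j (Ne.symm hne))
  have hpull : ∑ j, M i0 j * (t * h' j) = t * ∑ j, M i0 j * h' j := by
    rw [Finset.mul_sum]; exact Finset.sum_congr rfl (fun j _ => by ring)
  have e1t : t * (∑ j, M i0 j * h' j) + θ * cM i0 * (t * h' i0) = θ * ρ' * (t * h' i0) := by
    linear_combination t * heq i0
  rw [hti0] at e1t
  have key : θ * ρ' * h i0 ≤ θ * ρ * h i0 := by linarith [hsup i0]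
  have hp : 0 < θ * h i0 := mul_pos hθ (hpos i0)
  have : ρ' * (θ * h i0) ≤ ρ * (θ * h i0) := by
    calc ρ' * (θ * h i0) = θ * ρ' * h i0 := by ring
      _ ≤ θ * ρ * h i0 := key
      _ = ρ * (θ * h i0) := by ring
  exact le_of_mul_le_mul_right this hp

/-- Comparison: exact solution `(ρ', h')` vs subsolution `(ρ, h)` gives `ρ ≤ ρ'`. -/
private lemma comp_ge' {S : Type*} [Fintype S] [Nonempty S]
    (θ : ℝ) (hθ : 0 < θ) (ρ' ρ : ℝ) (h' h : S → ℝ)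
    (hpos' : ∀ i, 0 < h' i) (hpos : ∀ i, 0 < h i)
    (M : S → S → ℝ) (hod : ∀ i j, i ≠ j → 0 ≤ M i j) (cM : S → ℝ)
    (heq : ∀ i, ∑ j, M i j * h' j + θ * cM i * h' i = θ * ρ' * h' i)
    (hsub : ∀ i, θ * ρ * h i ≤ ∑ j, M i j * h j + θ * cM i * h i) :
    ρ ≤ ρ' := by
  obtain ⟨i0, -, hi0⟩ := Finset.exists_max_image Finset.univ (fun i => h i / h' i)
    ⟨Classical.arbitrary S, Finset.mem_univ _⟩
  set t := h i0 / h' i0 with ht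
  have htle : ∀ j, h j ≤ t * h' j := by
    intro j
    have h1 := hi0 j (Finset.mem_univ j)
    have := (div_le_iff₀ (hpos' j)).mp h1
    linarith
  have hti0 : t * h' i0 = h i0 := div_mul_cancel₀ _ (ne_of_gt (hpos' i0))
  have hsum : ∑ j, M i0 j * h j ≤ ∑ j, M i0 j * (t * h' j) := by
    apply Finset.sum_le_sum
    intro j _
    rcases eq_or_ne j i0 with rfl | hne
    · rw [hti0]
    · exact mul_le_mul_of_nonneg_left (htle j) (hod i0 j (Ne.symm hne))
  have hpull : ∑ j, M i0 j * (t * h' j) = t * ∑ j, M i0 j * h' j := by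
    rw [Finset.mul_sum]; exact Finset.sum_congr rfl (fun j _ => by ring)
  have e1t : t * (∑ j, M i0 j * h' j) + θ * cM i0 * (t * h' i0) = θ * ρ' * (t * h' i0) := by
    linear_combination t * heq i0
  rw [hti0] at e1t
  have key : θ * ρ * h i0 ≤ θ * ρ' * h i0 := by linarith [hsub i0]
  have hp : 0 < θ * h i0 := mul_pos hθ (hpos i0)
  have : ρ * (θ * h i0) ≤ ρ' * (θ * h i0) := by
    calc ρ * (θ * h i0) = θ * ρ * h i0 := by ring
      _ ≤ θ * ρ' * h i0 := key
      _ = ρ' * (θ * h i0) := by ring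
  exact le_of_mul_le_mul_right this hp

/-- Rigidity: if the exact solution and the supersolution share the same value `ρ`, and the
rate matrix is irreducible, then the supersolution is in fact an exact solution. -/
private lemma rigid' {S : Type*} [Fintype S] [Nonempty S]
    (θ : ℝ) (hθ : 0 < θ) (ρ : ℝ) (h' h : S → ℝ)
    (hpos' : ∀ i, 0 < h' i) (hpos : ∀ i, 0 < h i)
    (M : S → S → ℝ) (hod : ∀ i j, i ≠ j → 0 ≤ M i j) (cM : S → ℝ)
    (heq : ∀ i, ∑ j, M i j * h' j + θ * cM i * h' i = θ * ρ * h' i)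
    (hsup : ∀ i, ∑ j, M i j * h j + θ * cM i * h i ≤ θ * ρ * h i)
    (hirr : ∀ i j : S, ∃ (m : ℕ) (p : ℕ → S), p 0 = i ∧ p m = j ∧
      ∀ k < m, 0 < M (p k) (p (k + 1))) :
    ∀ i, ∑ j, M i j * h j + θ * cM i * h i = θ * ρ * h i := by
  obtain ⟨i0, -, hi0⟩ := Finset.exists_min_image Finset.univ (fun i => h i / h' i)
    ⟨Classical.arbitrary S, Finset.mem_univ _⟩
  set t := h i0 / h' i0 with ht
  have htle : ∀ j, t * h' j ≤ h j := by
    intro j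
    have h1 := hi0 j (Finset.mem_univ j)
    have := (le_div_iff₀ (hpos' j)).mp h1
    linarith
  have hti0 : t * h' i0 = h i0 := div_mul_cancel₀ _ (ne_of_gt (hpos' i0))
  have hZ : ∀ i, h i = t * h' i → ∀ j, 0 < M i j → h j = t * h' j := by
    intro i hi j hMj
    have hsumle : ∑ k, M i k * (t * h' k) ≤ ∑ k, M i k * h k := by
      apply Finset.sum_le_sum
      intro k _
      rcases eq_or_ne k i with rfl | hne
      · rw [hi]
      · exact mul_le_mul_of_nonneg_left (htle k) (hod i k (Ne.symm hne))
    have hpull : ∑ k, M i k * (t * h' k) = t * ∑ k, M i k * h' k := by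
      rw [Finset.mul_sum]; exact Finset.sum_congr rfl (fun k _ => by ring)
    have e1t : t * (∑ k, M i k * h' k) + θ * cM i * (t * h' i) = θ * ρ * (t * h' i) := by
      linear_combination t * heq i
    rw [← hi] at e1t
    have hsumeq : ∑ k, M i k * h k = ∑ k, M i k * (t * h' k) :=
      le_antisymm (by linarith [hsup i]) hsumle
    have hnn : ∀ k ∈ Finset.univ, (0 : ℝ) ≤ M i k * (h k - t * h' k) := by
      intro k _
      rcases eq_or_ne k i with rfl | hne
      · rw [hi, sub_self, mul_zero]
      · exact mul_nonneg (hod i k (Ne.symm hne)) (sub_nonneg.mpr (htle k))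
    have hsum0 : ∑ k, M i k * (h k - t * h' k) = 0 := by
      have hsplit : ∑ k, M i k * (h k - t * h' k)
          = ∑ k, M i k * h k - ∑ k, M i k * (t * h' k) := by
        rw [← Finset.sum_sub_distrib]; exact Finset.sum_congr rfl (fun k _ => by ring)
      rw [hsplit, hsumeq, sub_self]
    have hz := (Finset.sum_eq_zero_iff_of_nonneg hnn).mp hsum0 j (Finset.mem_univ j)
    rcases mul_eq_zero.mp hz with h1 | h1
    · exact absurd h1 (ne_of_gt hMj)
    · linarith [sub_eq_zero.mp h1]
  have hall : ∀ j, h j = t * h' j := by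
    intro j
    obtain ⟨m, p, hp0, hpm, hppos⟩ := hirr i0 j
    have hstep : ∀ k, k ≤ m → h (p k) = t * h' (p k) := by
      intro k
      induction k with
      | zero => intro _; rw [hp0]; exact hti0.symm
      | succ k ih =>
        intro hk
        have hkm : k < m := Nat.lt_of_succ_le hk
        exact hZ (p k) (ih hkm.le) (p (k + 1)) (hppos k hkm)
    have := hstep m le_rfl
    rwa [hpm] at this
  intro i
  have hsum' : ∑ j, M i j * h j = t * ∑ j, M i j * h' j := by
    rw [Finset.mul_sum]
    exact Finset.sum_congr rfl (fun j _ => by rw [hall j]; ring)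
  calc ∑ j, M i j * h j + θ * cM i * h i
      = t * (∑ j, M i j * h' j + θ * cM i * h' i) := by rw [hsum', hall i]; ring
    _ = t * (θ * ρ * h' i) := by rw [heq i]
    _ = θ * ρ * h i := by rw [hall i]; ring

/-- Termination of policy iteration: with finite state and action spaces, let each admissible
stationary control `u` have risk-sensitive average cost `ρ(u)` with positive eigenfunction
`h(u)` (normalized at a distinguished state `z`) solving the multiplicative Poisson equation,
every admissible control giving an irreducible chain. If `useq (n+1)` is obtained from
`useq n` by pointwise minimization of `u ↦ θc(i,u)h(useq n)(i) + ∑_j λ_{ij}(u) h(useq n)(j)`,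
then the costs `ρ(useq n)` strictly decrease until an optimal control is reached, and an
optimal stationary control is reached in finitely many steps. -/
theorem stmt_17 {S : Type*} [Fintype S] [Nonempty S] {A : Type*} [DecidableEq A]
    (z : S) (U : S → Finset A) (hUne : ∀ i, (U i).Nonempty)
    (lam : S → S → A → ℝ)
    (hod : ∀ i j u, i ≠ j → 0 ≤ lam i j u)
    (hrow : ∀ i u, ∑ j, lam i j u = 0)
    (hirr : ∀ u : S → A, (∀ i, u i ∈ U i) → ∀ i j : S,
      ∃ (m : ℕ) (p : ℕ → S), p 0 = i ∧ p m = j ∧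
        ∀ k < m, 0 < lam (p k) (p (k + 1)) (u (p k)))
    (c : S → A → ℝ) (hc0 : ∀ i u, 0 ≤ c i u)
    (θ : ℝ) (hθ : 0 < θ)
    (ρ : (S → A) → ℝ) (h : (S → A) → S → ℝ)
    (hpf : ∀ u : S → A, (∀ i, u i ∈ U i) →
      (∀ i, 0 < h u i) ∧ h u z = 1 ∧
      ∀ i, ∑ j, lam i j (u i) * h u j + θ * c i (u i) * h u i = θ * ρ u * h u i)
    (useq : ℕ → S → A)
    (h0adm : ∀ i, useq 0 i ∈ U i)
    (hmin : ∀ n i, useq (n + 1) i ∈ U i ∧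
      ∀ u ∈ U i,
        θ * c i (useq (n + 1) i) * h (useq n) i
            + ∑ j, lam i j (useq (n + 1) i) * h (useq n) j
          ≤ θ * c i u * h (useq n) i + ∑ j, lam i j u * h (useq n) j) :
    ∃ N : ℕ,
      (∀ u : S → A, (∀ i, u i ∈ U i) → ρ (useq N) ≤ ρ u) ∧
      ∀ n < N, ρ (useq (n + 1)) < ρ (useq n) := by
  classical
  -- all iterates are admissible
  have hadm : ∀ n, ∀ i, useq n i ∈ U i := by
    intro n
    induction n with
    | zero => exact h0adm
    | succ n _ => exact fun i => (hmin n i).1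
  -- Lemma (i): the costs are nonincreasing
  have lemLe : ∀ n, ρ (useq (n + 1)) ≤ ρ (useq n) := by
    intro n
    refine comp_le' θ hθ (ρ (useq (n + 1))) (ρ (useq n)) (h (useq (n + 1))) (h (useq n))
      (hpf (useq (n + 1)) (hadm (n + 1))).1 (hpf (useq n) (hadm n)).1
      (fun i j => lam i j (useq (n + 1) i))
      (fun i j hij => hod i j _ hij)
      (fun i => c i (useq (n + 1) i))
      (fun i => (hpf (useq (n + 1)) (hadm (n + 1))).2.2 i) ?_
    intro i
    have h1 := (hmin n i).2 (useq n i) (hadm n i)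
    have h2 := (hpf (useq n) (hadm n)).2.2 i
    linarith
  -- Lemma (ii)+(iii): if the cost does not decrease strictly, `useq n` is optimal
  have lemOpt : ∀ n, ρ (useq (n + 1)) = ρ (useq n) →
      ∀ v : S → A, (∀ i, v i ∈ U i) → ρ (useq n) ≤ ρ v := by
    intro n hn v hv
    have hrig := rigid' θ hθ (ρ (useq n)) (h (useq (n + 1))) (h (useq n))
      (hpf (useq (n + 1)) (hadm (n + 1))).1 (hpf (useq n) (hadm n)).1
      (fun i j => lam i j (useq (n + 1) i))
      (fun i j hij => hod i j _ hij)
      (fun i => c i (useq (n + 1) i))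
      (fun i => by
        have := (hpf (useq (n + 1)) (hadm (n + 1))).2.2 i
        rw [hn] at this
        exact this)
      (fun i => by
        have h1 := (hmin n i).2 (useq n i) (hadm n i)
        have h2 := (hpf (useq n) (hadm n)).2.2 i
        linarith)
      (hirr (useq (n + 1)) (hadm (n + 1)))
    refine comp_ge' θ hθ (ρ v) (ρ (useq n)) (h v) (h (useq n))
      (hpf v hv).1 (hpf (useq n) (hadm n)).1
      (fun i j => lam i j (v i))
      (fun i j hij => hod i j _ hij)
      (fun i => c i (v i))
      (fun i => (hpf v hv).2.2 i) ?_
    intro i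
    have h1 := (hmin n i).2 (v i) (hv i)
    have h2 := hrig i
    linarith
  -- the costs take finitely many values
  have hfin : (Set.range fun n => ρ (useq n)).Finite := by
    have hsetfin : {u : S → A | ∀ i, u i ∈ U i}.Finite := by
      have hsub : {u : S → A | ∀ i, u i ∈ U i} ⊆
          Set.pi Set.univ (fun i => (U i : Set A)) := by
        intro u hu i _
        exact hu i
      exact (Set.Finite.pi (fun i => (U i).finite_toSet)).subset hsub
    refine (hsetfin.image ρ).subset ?_
    rintro x ⟨n, rfl⟩
    exact ⟨useq n, hadm n, rfl⟩
  -- hence the strict decrease must stop at some point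
  have hex : ∃ n, ρ (useq (n + 1)) = ρ (useq n) := by
    by_contra hc
    push_neg at hc
    have hstrict : StrictAnti fun n => ρ (useq n) :=
      strictAnti_nat_of_succ_lt (fun n => lt_of_le_of_ne (lemLe n) (hc n))
    exact (Set.infinite_range_of_injective hstrict.injective) hfin
  refine ⟨Nat.find hex, lemOpt _ (Nat.find_spec hex), ?_⟩
  intro n hn
  exact lt_of_le_of_ne (lemLe n) (Nat.find_min hex hn)
end
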